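/- Let Q be a bipartite quiver on a finite vertex set V. For a map ρ : V → [1,∞) define Zρ : V → ℝ by Zρ(v) = sqrt( Π_u ρ(u)^{A(v,u)} + Π_w ρ(w)^{B(v,w)} ). Then the following are equivalent: (1) Q has a strictly subadditive labeling; (2) there exists ρ₁ : V → ℝ with ρ₁(v) > 1 for all v and 1 < Zρ₁(v) < ρ₁(v) for all v ∈ V; (3) Q has a fixed point. -/

import Mathlib

open scoped BigOperators

/-- A bipartite quiver on a finite vertex set `V`, encoded by a bipartition `eps`
and the two symmetric edge-multiplicity matrices `A` (arrows from `eps = 0` to `eps = 1`)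
and `B` (arrows from `eps = 1` to `eps = 0`). -/
def BipartiteData {V : Type} [Fintype V] (eps : V → ℤ) (A B : V → V → ℕ) : Prop :=
  (∀ v, eps v = 0 ∨ eps v = 1) ∧
  (∀ u v, A u v = A v u) ∧
  (∀ u v, B u v = B v u) ∧
  (∀ v, A v v = 0) ∧
  (∀ v, B v v = 0) ∧
  (∀ u v, eps u = eps v → A u v = 0 ∧ B u v = 0) ∧
  (∀ u v, A u v * B u v = 0)

/-- A bipartite quiver is recurrent iff the matrices `A` and `B` commute. -/
def RecurrentQuiver {V : Type} [Fintype V] (A B : V → V → ℕ) : Prop :=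
  ∀ u v, (∑ w, A u w * B w v) = ∑ w, B u w * A w v

/-- A fixed point of the `T`-system dynamics: `ρ : V → ℝ` with `ρ v > 1` and
`ρ v ^ 2 = ∏ u, ρ u ^ A v u + ∏ u, ρ u ^ B v u` for all `v`. -/
def IsFixedPoint {V : Type} [Fintype V] (A B : V → V → ℕ) (rho : V → ℝ) : Prop :=
  (∀ v, 1 < rho v) ∧
  (∀ v, rho v ^ 2 = (∏ u, rho u ^ A v u) + (∏ u, rho u ^ B v u))

/-- A strictly subadditive labeling: `ν : V → ℝ` positive with
`2ν v > Σ_u A v u * ν u` and `2ν v > Σ_u B v u * ν u` for all `v`. -/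
def IsStrictlySubadditiveLabeling {V : Type} [Fintype V] (A B : V → V → ℕ)
    (nu : V → ℝ) : Prop :=
  (∀ v, 0 < nu v) ∧
  (∀ v, (∑ u, (A v u : ℝ) * nu u) < 2 * nu v) ∧
  (∀ v, (∑ u, (B v u : ℝ) * nu u) < 2 * nu v)

/-- The operator `Z` of Section 4 of the paper. -/
noncomputable def Zop {V : Type} [Fintype V] (A B : V → V → ℕ) (rho : V → ℝ) : V → ℝ :=
  fun v => Real.sqrt ((∏ u, rho u ^ A v u) + (∏ u, rho u ^ B v u))

/-!
Under `ρ = exp ν`, the monomials `∏ ρ u ^ A v u` become `exp (∑ A v u ν u)`, so a fixed point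
gives `∑ A v u ν u < 2 ν v` by dropping one of the two positive summands, and conversely a
strictly subadditive labeling makes `exp (t ν)` a strict supersolution `Zρ < ρ` once `t` is
large. From a supersolution the iterates of the monotone, continuous map `Z` decrease, stay above
`1`, and converge to a fixed point.
-/

open Filter Topology

theorem Real.prod_exp_pow {ι : Type*} (s : Finset ι) (n : ι → ℕ) (x : ι → ℝ) :
    ∏ i ∈ s, Real.exp (x i) ^ n i = Real.exp (∑ i ∈ s, (n i : ℝ) * x i) := by
  simp_rw [← Real.exp_nat_mul, Real.exp_sum]

theorem eventually_exp_mul_add_exp_mul_lt {a b c : ℝ} (ha : a < c) (hb : b < c) :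
    ∀ᶠ t in atTop, Real.exp (t * a) + Real.exp (t * b) < Real.exp (t * c) := by
  have hdecay : ∀ {d : ℝ}, d < 0 → Tendsto (fun t => Real.exp (t * d)) atTop (𝓝 0) := fun hd =>
    Real.tendsto_exp_atBot.comp (tendsto_id.atTop_mul_const_of_neg hd)
  have hsum := ((hdecay (sub_neg.2 ha)).add (hdecay (sub_neg.2 hb))).eventually
    (gt_mem_nhds (show (0 : ℝ) + 0 < 1 by norm_num))
  filter_upwards [hsum] with t ht
  have := mul_lt_mul_of_pos_right ht (Real.exp_pos (t * c))
  rwa [add_mul, ← Real.exp_add, ← Real.exp_add, one_mul, mul_sub, mul_sub, sub_add_cancel,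
    sub_add_cancel] at this

section Zop

variable {V : Type} [Fintype V] (A B : V → V → ℕ)

theorem one_lt_Zop {ρ : V → ℝ} (hρ : 1 ≤ ρ) (v : V) : 1 < Zop A B ρ v := by
  have hprod : ∀ C : V → V → ℕ, 1 ≤ ∏ u, ρ u ^ C v u := fun C =>
    Finset.one_le_prod fun u _ => one_le_pow₀ (hρ u)
  exact Real.lt_sqrt_of_sq_lt (by linarith [hprod A, hprod B])

theorem Zop_mono {r s : V → ℝ} (hr : 0 ≤ r) (hrs : r ≤ s) : Zop A B r ≤ Zop A B s := by
  intro v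
  have hprod : ∀ C : V → V → ℕ, ∏ u, r u ^ C v u ≤ ∏ u, s u ^ C v u := fun C =>
    Finset.prod_le_prod (fun u _ => pow_nonneg (hr u) _)
      (fun u _ => pow_le_pow_left₀ (hr u) (hrs u) _)
  exact Real.sqrt_le_sqrt (add_le_add (hprod A) (hprod B))

theorem continuous_Zop : Continuous (Zop A B) := by
  unfold Zop
  fun_prop

theorem Zop_exp (ν : V → ℝ) (v : V) :
    Zop A B (fun u => Real.exp (ν u)) v =
      √(Real.exp (∑ u, (A v u : ℝ) * ν u) + Real.exp (∑ u, (B v u : ℝ) * ν u)) := by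
  simp only [Zop, Real.prod_exp_pow]

theorem one_le_Zop_iterate {ρ : V → ℝ} (hρ : 1 ≤ ρ) (n : ℕ) : 1 ≤ (Zop A B)^[n] ρ := by
  induction n with
  | zero => exact hρ
  | succ n ih =>
    rw [Function.iterate_succ_apply']
    exact fun v => (one_lt_Zop A B ih v).le

theorem antitone_Zop_iterate {ρ : V → ℝ} (hρ : 1 ≤ ρ) (hZ : Zop A B ρ ≤ ρ) :
    Antitone fun n => (Zop A B)^[n] ρ := by
  refine antitone_nat_of_succ_le fun n => ?_
  induction n with
  | zero => exact hZ
  | succ n ih =>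
    have hmono := Zop_mono A B (zero_le_one.trans (one_le_Zop_iterate A B hρ (n + 1))) ih
    simpa only [Function.iterate_succ_apply'] using hmono

theorem isFixedPoint_of_isFixedPt_Zop {ρ : V → ℝ} (hρ : ∀ v, 1 < ρ v)
    (hfix : Function.IsFixedPt (Zop A B) ρ) : IsFixedPoint A B ρ := by
  have h0 : ∀ u, 0 ≤ ρ u := fun u => zero_le_one.trans (hρ u).le
  refine ⟨hρ, fun v => ?_⟩
  rw [← congrFun hfix v]
  exact Real.sq_sqrt (add_nonneg (Finset.prod_nonneg fun u _ => pow_nonneg (h0 u) _)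
    (Finset.prod_nonneg fun u _ => pow_nonneg (h0 u) _))

theorem exists_isFixedPoint_of_Zop_le {ρ₁ : V → ℝ} (h1 : 1 ≤ ρ₁) (hZ : Zop A B ρ₁ ≤ ρ₁) :
    ∃ ρ, IsFixedPoint A B ρ := by
  have hbdd : BddBelow (Set.range fun n => (Zop A B)^[n] ρ₁) :=
    ⟨1, Set.forall_mem_range.2 (one_le_Zop_iterate A B h1)⟩
  have hlim := tendsto_atTop_ciInf (antitone_Zop_iterate A B h1 hZ) hbdd
  have hfix := isFixedPt_of_tendsto_iterate hlim (continuous_Zop A B).continuousAt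
  have hge : 1 ≤ ⨅ n, (Zop A B)^[n] ρ₁ := le_ciInf (one_le_Zop_iterate A B h1)
  exact ⟨_, isFixedPoint_of_isFixedPt_Zop A B (fun v => hfix.eq ▸ one_lt_Zop A B hge v) hfix⟩

theorem IsFixedPoint.isStrictlySubadditiveLabeling_log {ρ : V → ℝ} (h : IsFixedPoint A B ρ) :
    IsStrictlySubadditiveLabeling A B fun v => Real.log (ρ v) := by
  obtain ⟨hρ, heq⟩ := h
  set ν : V → ℝ := fun v => Real.log (ρ v)
  have hexp : ρ = fun v => Real.exp (ν v) :=
    funext fun v => (Real.exp_log (zero_lt_one.trans (hρ v))).symm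
  have heq' : ∀ v, Real.exp (2 * ν v) =
      Real.exp (∑ u, (A v u : ℝ) * ν u) + Real.exp (∑ u, (B v u : ℝ) * ν u) := by
    intro v
    have h := heq v
    simp only [hexp, Real.prod_exp_pow] at h
    rwa [← Real.exp_nat_mul, Nat.cast_ofNat] at h
  refine ⟨fun v => Real.log_pos (hρ v), fun v => ?_, fun v => ?_⟩
  · exact Real.exp_lt_exp.1 (heq' v ▸ lt_add_of_pos_right _ (Real.exp_pos _))
  · exact Real.exp_lt_exp.1 (heq' v ▸ lt_add_of_pos_left _ (Real.exp_pos _))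

theorem IsStrictlySubadditiveLabeling.exists_Zop_lt {ν : V → ℝ}
    (h : IsStrictlySubadditiveLabeling A B ν) :
    ∃ t : ℝ, 0 < t ∧ ∀ v, Zop A B (fun u => Real.exp (t * ν u)) v < Real.exp (t * ν v) := by
  obtain ⟨-, hA, hB⟩ := h
  have hev : ∀ᶠ t in atTop, ∀ v, Real.exp (t * ∑ u, (A v u : ℝ) * ν u) +
      Real.exp (t * ∑ u, (B v u : ℝ) * ν u) < Real.exp (t * (2 * ν v)) :=
    eventually_all.2 fun v => eventually_exp_mul_add_exp_mul_lt (hA v) (hB v)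
  obtain ⟨t, ht, htpos⟩ := (hev.and (eventually_gt_atTop 0)).exists
  refine ⟨t, htpos, fun v => ?_⟩
  have hscale : ∀ C : V → V → ℕ, ∑ u, (C v u : ℝ) * (t * ν u) = t * ∑ u, (C v u : ℝ) * ν u :=
    fun C => by rw [Finset.mul_sum]; exact Finset.sum_congr rfl fun u _ => by ring
  rw [Zop_exp, hscale, hscale, Real.sqrt_lt' (Real.exp_pos _), ← Real.exp_nat_mul]
  simpa only [Nat.cast_ofNat, mul_left_comm] using ht v

theorem IsStrictlySubadditiveLabeling.exists_Zop_contraction {ν : V → ℝ}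
    (h : IsStrictlySubadditiveLabeling A B ν) :
    ∃ ρ₁ : V → ℝ, (∀ v, 1 < ρ₁ v) ∧ ∀ v, 1 < Zop A B ρ₁ v ∧ Zop A B ρ₁ v < ρ₁ v := by
  obtain ⟨t, ht, hlt⟩ := h.exists_Zop_lt
  have h1 : ∀ v, 1 < Real.exp (t * ν v) := fun v => Real.one_lt_exp_iff.2 (mul_pos ht (h.1 v))
  exact ⟨_, h1, fun v => ⟨one_lt_Zop A B (fun u => (h1 u).le) v, hlt v⟩⟩

end Zop

theorem ssl_iff_Zcontraction_iff_fixedPoint_general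
    {V : Type} [Fintype V]
    (A B : V → V → ℕ) :
    ((∃ nu : V → ℝ, IsStrictlySubadditiveLabeling A B nu) ↔
      (∃ rho₁ : V → ℝ, (∀ v, 1 < rho₁ v) ∧
        (∀ v, 1 < Zop A B rho₁ v ∧ Zop A B rho₁ v < rho₁ v))) ∧
    ((∃ rho₁ : V → ℝ, (∀ v, 1 < rho₁ v) ∧
        (∀ v, 1 < Zop A B rho₁ v ∧ Zop A B rho₁ v < rho₁ v)) ↔
      (∃ rho : V → ℝ, IsFixedPoint A B rho)) := by
  have h12 : (∃ ν, IsStrictlySubadditiveLabeling A B ν) → ∃ ρ₁ : V → ℝ, (∀ v, 1 < ρ₁ v) ∧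
      ∀ v, 1 < Zop A B ρ₁ v ∧ Zop A B ρ₁ v < ρ₁ v :=
    fun ⟨_, hν⟩ => hν.exists_Zop_contraction
  have h23 : (∃ ρ₁ : V → ℝ, (∀ v, 1 < ρ₁ v) ∧ ∀ v, 1 < Zop A B ρ₁ v ∧ Zop A B ρ₁ v < ρ₁ v) →
      ∃ ρ, IsFixedPoint A B ρ :=
    fun ⟨_, h1, hZ⟩ => exists_isFixedPoint_of_Zop_le A B (fun v => (h1 v).le) fun v => (hZ v).2.le
  have h31 : (∃ ρ, IsFixedPoint A B ρ) → ∃ ν, IsStrictlySubadditiveLabeling A B ν :=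
    fun ⟨_, hρ⟩ => ⟨_, hρ.isStrictlySubadditiveLabeling_log⟩
  exact ⟨⟨h12, h31 ∘ h23⟩, ⟨h23, h12 ∘ h31⟩⟩

/-- the equivalence of (1) the strictly subadditive labeling property,
(2) the existence of `ρ₁ > 1` with `1 < Zρ₁ < ρ₁`, and (3) the fixed point property. -/
theorem ssl_iff_Zcontraction_iff_fixedPoint
    {V : Type} [Fintype V] [DecidableEq V]
    (eps : V → ℤ) (A B : V → V → ℕ)
    (hbip : BipartiteData eps A B) :
    ((∃ nu : V → ℝ, IsStrictlySubadditiveLabeling A B nu) ↔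
      (∃ rho₁ : V → ℝ, (∀ v, 1 < rho₁ v) ∧
        (∀ v, 1 < Zop A B rho₁ v ∧ Zop A B rho₁ v < rho₁ v))) ∧
    ((∃ rho₁ : V → ℝ, (∀ v, 1 < rho₁ v) ∧
        (∀ v, 1 < Zop A B rho₁ v ∧ Zop A B rho₁ v < rho₁ v)) ↔
      (∃ rho : V → ℝ, IsFixedPoint A B rho)) :=
  ssl_iff_Zcontraction_iff_fixedPoint_general A B
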